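/- For every a ∈ 𝒜 one has Δ(S(a)) = (S⊗S)(c(Δ(a))), i.e. Δ ∘ S = (S⊗S) ∘ c ∘ Δ as maps 𝒜 → 𝒜 ⊗_ℂ 𝒜. -/

import Mathlib

open scoped TensorProduct

noncomputable section

/-- The monomial family `α^n γ^m (γ*)^k` (for `n ≥ 0`) resp. `(α*)^{-n} γ^m (γ*)^k`
(for `n < 0`), indexed by `(n, m, k) ∈ ℤ × ℕ × ℕ`. -/
def suqMono {A : Type*} [Ring A] [StarRing A] (a g : A) (i : ℤ × ℕ × ℕ) : A :=
  (if 0 ≤ i.1 then a ^ i.1.toNat else (star a) ^ (-i.1).toNat) * g ^ i.2.1 * (star g) ^ i.2.2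

/-- The degree-`p` homogeneous component `𝒜_p`: the `ℂ`-span of the basis monomials with
`m - k = p`. -/
def suqHomog {A : Type*} [Ring A] [Algebra ℂ A] [StarRing A] (a g : A) (p : ℤ) :
    Submodule ℂ A :=
  Submodule.span ℂ
    {x | ∃ i : ℤ × ℕ × ℕ, (i.2.1 : ℤ) - (i.2.2 : ℤ) = p ∧ x = suqMono a g i}

/-- The defining relations of `Pol(SU_q(2))`. -/
def SUqRel {A : Type*} [Ring A] [Algebra ℂ A] [StarRing A] (q : ℂ) (a g : A) : Prop :=
  star a * a + star g * g = 1 ∧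
  a * star a + ((‖q‖ : ℂ) ^ 2) • (star g * g) = 1 ∧
  g * star g = star g * g ∧
  a * g = (starRingEnd ℂ q) • (g * a) ∧
  a * star g = q • (star g * a)

/-- The monomials form a `ℂ`-basis. -/
def SUqBasis {A : Type*} [Ring A] [Algebra ℂ A] [StarRing A] (a g : A) : Prop :=
  LinearIndependent ℂ (suqMono a g) ∧
  Submodule.span ℂ (Set.range (suqMono a g)) = ⊤

/-- The characterizing properties of the antipode `S`. -/
def SUqAntipode {A : Type*} [Ring A] [Algebra ℂ A] [StarRing A] (q : ℂ) (a g : A)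
    (S : A →ₗ[ℂ] A) : Prop :=
  S 1 = 1 ∧ S a = star a ∧ S (star a) = a ∧
  S g = (-(starRingEnd ℂ q)) • g ∧ S (star g) = (-q⁻¹) • star g ∧
  (∀ p : ℤ, ∀ x ∈ suqHomog a g p, S x ∈ suqHomog a g p) ∧
  (∀ p r : ℤ, ∀ x ∈ suqHomog a g p, ∀ y ∈ suqHomog a g r,
    S (x * y) = ((q / starRingEnd ℂ q) ^ (-(p * r))) • (S y * S x))

/-- The braided multiplication on `𝒜 ⊗ 𝒜`. -/
def SUqBraidedMul {A : Type*} [Ring A] [Algebra ℂ A] [StarRing A] (q : ℂ) (a g : A)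
    (μ : A ⊗[ℂ] A →ₗ[ℂ] A ⊗[ℂ] A →ₗ[ℂ] A ⊗[ℂ] A) : Prop :=
  ∀ (x w : A) (r s : ℤ), ∀ y ∈ suqHomog a g r, ∀ z ∈ suqHomog a g s,
    μ (x ⊗ₜ[ℂ] y) (z ⊗ₜ[ℂ] w)
      = ((q / starRingEnd ℂ q) ^ (-(r * s))) • ((x * z) ⊗ₜ[ℂ] (y * w))

/-- The characterizing properties of the comultiplication `Δ` (as a unital algebra
homomorphism into the braided tensor square with multiplication `μ`). -/
def SUqComul {A : Type*} [Ring A] [Algebra ℂ A] [StarRing A] (q : ℂ) (a g : A)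
    (μ : A ⊗[ℂ] A →ₗ[ℂ] A ⊗[ℂ] A →ₗ[ℂ] A ⊗[ℂ] A) (Δ : A →ₗ[ℂ] A ⊗[ℂ] A) : Prop :=
  Δ 1 = 1 ⊗ₜ[ℂ] 1 ∧ (∀ x y : A, Δ (x * y) = μ (Δ x) (Δ y)) ∧
  Δ a = a ⊗ₜ[ℂ] a - q • ((star g) ⊗ₜ[ℂ] g) ∧
  Δ g = g ⊗ₜ[ℂ] a + (star a) ⊗ₜ[ℂ] g ∧
  Δ (star a) = (star a) ⊗ₜ[ℂ] (star a) - q • (g ⊗ₜ[ℂ] (star g)) ∧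
  Δ (star g) = (star g) ⊗ₜ[ℂ] (star a) + a ⊗ₜ[ℂ] (star g)

/-- The braided flip `c` on `𝒜 ⊗ 𝒜`. -/
def SUqFlip {A : Type*} [Ring A] [Algebra ℂ A] [StarRing A] (q : ℂ) (a g : A)
    (c : A ⊗[ℂ] A →ₗ[ℂ] A ⊗[ℂ] A) : Prop :=
  ∀ (p r : ℤ), ∀ x ∈ suqHomog a g p, ∀ y ∈ suqHomog a g r,
    c (x ⊗ₜ[ℂ] y) = ((q / starRingEnd ℂ q) ^ (-(p * r))) • (y ⊗ₜ[ℂ] x)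

/-- The Haar functional, defined on the basis. -/
def SUqHaar {A : Type*} [Ring A] [Algebra ℂ A] [StarRing A] (q : ℂ) (a g : A)
    (h : A →ₗ[ℂ] ℂ) : Prop :=
  ∀ i : ℤ × ℕ × ℕ, h (suqMono a g i) =
    if i.1 = 0 ∧ i.2.1 = i.2.2
    then (1 - (‖q‖ : ℂ) ^ 2) / (1 - (‖q‖ : ℂ) ^ (2 * (i.2.1 + 1)))
    else 0

/-! Both sides are linear in `x`, so it suffices to treat the basis monomials, which are
products of generators. Consider the `x ∈ 𝒜_p` for which `Δ x` has total degree `p` and the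
identity holds at `x`. The generators are of this kind by direct computation, and such
elements are closed under products: `S` is anti-multiplicative up to the factor `ζ^{-pr}`, and
`(S ⊗ S) ∘ c` is anti-multiplicative up to the same factor for the braided multiplication of
`𝒜 ⊗ 𝒜`, so the two factors cancel. This uses that the grading is multiplicative,
`𝒜_p 𝒜_r ⊆ 𝒜_{p+r}`, which is where the commutation relations enter: they let one rewrite a
product of basis monomials as a combination of basis monomials of the right degree. -/

theorem pow_mul_eq_smul_mul_pow {R A : Type*} [CommSemiring R] [Semiring A] [Algebra R A]
    {c : R} {x y : A} (h : y * x = c • (x * y)) (m : ℕ) : y ^ m * x = c ^ m • (x * y ^ m) := by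
  induction m with
  | zero => simp
  | succ m ih =>
    rw [pow_succ, mul_assoc, h, mul_smul_comm, ← mul_assoc, ih, smul_mul_assoc, smul_smul,
      pow_succ, mul_comm (c ^ m) c, mul_assoc x]

section Grading

variable {A : Type*} [Ring A] [StarRing A] (a g : A)

def suqPow (n : ℤ) : A := if 0 ≤ n then a ^ n.toNat else star a ^ (-n).toNat

theorem suqMono_eq (i : ℤ × ℕ × ℕ) :
    suqMono a g i = suqPow a i.1 * g ^ i.2.1 * star g ^ i.2.2 := rfl

theorem suqPow_add_one {n : ℤ} (hn : 0 ≤ n) : suqPow a (n + 1) = suqPow a n * a := by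
  rw [suqPow, suqPow, if_pos hn, if_pos (by omega), ← pow_succ]
  congr 1
  omega

theorem suqPow_sub_one {n : ℤ} (hn : n ≤ 0) :
    suqPow a (n - 1) = suqPow a n * star a := by
  rw [suqPow, suqPow, if_neg (by omega)]
  split_ifs with h
  · rw [show n = 0 by omega]
    simp
  · rw [← pow_succ]
    congr 1
    omega

variable [Algebra ℂ A]

theorem suqMono_mem_suqHomog {p : ℤ} (i : ℤ × ℕ × ℕ) (hi : (i.2.1 : ℤ) - i.2.2 = p) :
    suqMono a g i ∈ suqHomog a g p :=
  Submodule.subset_span ⟨i, hi, rfl⟩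

theorem suqPow_mul_mem_suqHomog {p : ℤ} (n : ℤ) {m k : ℕ} (h : (m : ℤ) - k = p) :
    suqPow a n * g ^ m * star g ^ k ∈ suqHomog a g p :=
  suqMono_mem_suqHomog a g (n, m, k) h

theorem one_mem_suqHomog : (1 : A) ∈ suqHomog a g 0 := by
  simpa [suqMono] using suqMono_mem_suqHomog a g (0, 0, 0) rfl

theorem a_mem_suqHomog : a ∈ suqHomog a g 0 := by
  simpa [suqMono] using suqMono_mem_suqHomog a g (1, 0, 0) rfl

theorem star_a_mem_suqHomog : star a ∈ suqHomog a g 0 := by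
  simpa [suqMono] using suqMono_mem_suqHomog a g (-1, 0, 0) rfl

theorem g_mem_suqHomog : g ∈ suqHomog a g 1 := by
  simpa [suqMono] using suqMono_mem_suqHomog a g (0, 1, 0) rfl

theorem star_g_mem_suqHomog : star g ∈ suqHomog a g (-1) := by
  simpa [suqMono] using suqMono_mem_suqHomog a g (0, 0, 1) rfl

variable {a g}

theorem mul_mem_of_forall_suqMono_mul_mem {p : ℤ} {y : A} {M : Submodule ℂ A}
    (h : ∀ i : ℤ × ℕ × ℕ, (i.2.1 : ℤ) - i.2.2 = p → suqMono a g i * y ∈ M) {x : A}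
    (hx : x ∈ suqHomog a g p) : x * y ∈ M :=
  (Submodule.span_le (p := M.comap (LinearMap.mulRight ℂ y))).2
    (by rintro _ ⟨i, hi, rfl⟩; exact h i hi) hx

theorem suqMono_mul_eq_smul {c d : ℂ} {x : A} (hg : g * x = c • (x * g))
    (hgs : star g * x = d • (x * star g)) (i : ℤ × ℕ × ℕ) :
    suqMono a g i * x
      = (c ^ i.2.1 * d ^ i.2.2) • (suqPow a i.1 * x * g ^ i.2.1 * star g ^ i.2.2) := by
  simp only [suqMono_eq, mul_assoc, pow_mul_eq_smul_mul_pow hgs, mul_smul_comm]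
  rw [← mul_assoc (g ^ _) x, pow_mul_eq_smul_mul_pow hg]
  simp only [smul_mul_assoc, mul_smul_comm, smul_smul, mul_assoc, mul_comm (d ^ _)]

theorem mul_pow_mem_suqHomog_of_mul_mem {y : A} {d : ℤ}
    (hy : ∀ p, ∀ x ∈ suqHomog a g p, x * y ∈ suqHomog a g (p + d)) (t : ℕ) {p : ℤ} {x : A}
    (hx : x ∈ suqHomog a g p) : x * y ^ t ∈ suqHomog a g (p + t * d) := by
  induction t with
  | zero => simpa using hx
  | succ t ih =>
    rw [pow_succ, ← mul_assoc, Nat.cast_succ, add_one_mul, ← add_assoc]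
    exact hy _ _ ih

theorem mul_star_g_mem_suqHomog {p : ℤ} {x : A} (hx : x ∈ suqHomog a g p) :
    x * star g ∈ suqHomog a g (p - 1) := by
  refine mul_mem_of_forall_suqMono_mul_mem (fun ⟨n, m, k⟩ hi => ?_) hx
  rw [suqMono_eq, mul_assoc _ (star g ^ k), ← pow_succ]
  exact suqPow_mul_mem_suqHomog a g n (by simp only at hi; push_cast; omega)

variable (hgg : Commute g (star g))
include hgg

theorem suqPow_mul_star_g_mul_g_mem_suqHomog (n : ℤ) {m k : ℕ} {p : ℤ} (h : (m : ℤ) - k = p) :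
    suqPow a n * (star g * g) * g ^ m * star g ^ k ∈ suqHomog a g p := by
  have hcomm : star g * (g * g ^ m) = g ^ (m + 1) * star g := by
    rw [← pow_succ']
    exact (hgg.symm.pow_right _).eq
  have : suqPow a n * (star g * g) * g ^ m * star g ^ k
      = suqPow a n * g ^ (m + 1) * star g ^ (k + 1) := by
    rw [pow_succ' (star g), mul_assoc (suqPow a n), mul_assoc (star g), hcomm]
    simp only [mul_assoc]
  rw [this]
  exact suqPow_mul_mem_suqHomog a g n (by push_cast; omega)

theorem mul_g_mem_suqHomog {p : ℤ} {x : A} (hx : x ∈ suqHomog a g p) :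
    x * g ∈ suqHomog a g (p + 1) := by
  refine mul_mem_of_forall_suqMono_mul_mem (fun ⟨n, m, k⟩ hi => ?_) hx
  have : suqMono a g (n, m, k) * g = suqMono a g (n, m + 1, k) := by
    simp only [suqMono_eq, mul_assoc, (hgg.symm.pow_left k).eq, pow_succ]
  rw [this]
  exact suqMono_mem_suqHomog a g _ (by simp only at hi ⊢; push_cast; omega)

end Grading

namespace SUqRel

variable {A : Type*} [Ring A] [Algebra ℂ A] [StarRing A] {q : ℂ} {a g : A}
  (hrel : SUqRel q a g)
include hrel

theorem commute_g_star_g : Commute g (star g) := hrel.2.2.1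

theorem g_mul_a (hq : q ≠ 0) : g * a = (starRingEnd ℂ q)⁻¹ • (a * g) := by
  rw [hrel.2.2.2.1, smul_smul, inv_mul_cancel₀ (by simpa using hq), one_smul]

theorem star_g_mul_a (hq : q ≠ 0) : star g * a = q⁻¹ • (a * star g) := by
  rw [hrel.2.2.2.2, smul_smul, inv_mul_cancel₀ hq, one_smul]

theorem mul_a_mem (hq : q ≠ 0) {p : ℤ} {x : A} (hx : x ∈ suqHomog a g p) :
    x * a ∈ suqHomog a g p := by
  refine mul_mem_of_forall_suqMono_mul_mem (fun ⟨n, m, k⟩ hi => ?_) hx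
  rw [suqMono_mul_eq_smul (hrel.g_mul_a hq) (hrel.star_g_mul_a hq)]
  refine Submodule.smul_mem _ _ ?_
  simp only at hi ⊢
  by_cases hn : 0 ≤ n
  · rw [← suqPow_add_one a hn]
    exact suqPow_mul_mem_suqHomog a g _ hi
  · have hpow : suqPow a n = suqPow a (n + 1) * star a := by
      rw [← suqPow_sub_one a (by omega), add_sub_cancel_right]
    rw [hpow, mul_assoc _ (star a), eq_sub_of_add_eq hrel.1, mul_sub, mul_one, sub_mul, sub_mul]
    exact sub_mem (suqPow_mul_mem_suqHomog a g _ hi)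
      (suqPow_mul_star_g_mul_g_mem_suqHomog hrel.commute_g_star_g _ hi)

variable [StarModule ℂ A]

theorem g_mul_star_a : g * star a = starRingEnd ℂ q • (star a * g) := by
  simpa using congrArg star hrel.2.2.2.2

theorem star_g_mul_star_a : star g * star a = q • (star a * star g) := by
  simpa using congrArg star hrel.2.2.2.1

theorem mul_star_a_mem {p : ℤ} {x : A} (hx : x ∈ suqHomog a g p) :
    x * star a ∈ suqHomog a g p := by
  refine mul_mem_of_forall_suqMono_mul_mem (fun ⟨n, m, k⟩ hi => ?_) hx
  rw [suqMono_mul_eq_smul hrel.g_mul_star_a hrel.star_g_mul_star_a]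
  refine Submodule.smul_mem _ _ ?_
  simp only at hi ⊢
  by_cases hn : n ≤ 0
  · rw [← suqPow_sub_one a hn]
    exact suqPow_mul_mem_suqHomog a g _ hi
  · have hpow : suqPow a n = suqPow a (n - 1) * a := by
      rw [← suqPow_add_one a (by omega), sub_add_cancel]
    rw [hpow, mul_assoc _ a, eq_sub_of_add_eq hrel.2.1, mul_sub, mul_one, mul_smul_comm,
      sub_mul, sub_mul, smul_mul_assoc, smul_mul_assoc]
    exact sub_mem (suqPow_mul_mem_suqHomog a g _ hi)
      (Submodule.smul_mem _ _ (suqPow_mul_star_g_mul_g_mem_suqHomog hrel.commute_g_star_g _ hi))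

theorem mul_suqPow_mem (hq : q ≠ 0) {p : ℤ} {x : A} (hx : x ∈ suqHomog a g p) (n : ℤ) :
    x * suqPow a n ∈ suqHomog a g p := by
  unfold suqPow
  split_ifs
  · simpa using mul_pow_mem_suqHomog_of_mul_mem (d := 0)
      (fun _ _ hx => by simpa using hrel.mul_a_mem hq hx) _ hx
  · simpa using mul_pow_mem_suqHomog_of_mul_mem (d := 0)
      (fun _ _ hx => by simpa using hrel.mul_star_a_mem hx) _ hx

theorem mul_mem_suqHomog (hq : q ≠ 0) {p r : ℤ} {x y : A} (hx : x ∈ suqHomog a g p)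
    (hy : y ∈ suqHomog a g r) : x * y ∈ suqHomog a g (p + r) := by
  have hle : suqHomog a g r ≤ (suqHomog a g (p + r)).comap (LinearMap.mulLeft ℂ x) := by
    refine Submodule.span_le.2 ?_
    rintro _ ⟨⟨n, m, k⟩, hi, rfl⟩
    simp only [SetLike.mem_coe, Submodule.mem_comap, LinearMap.mulLeft_apply, suqMono_eq,
      ← mul_assoc]
    have hg := mul_pow_mem_suqHomog_of_mul_mem
      (fun _ _ => mul_g_mem_suqHomog hrel.commute_g_star_g) m
      (hrel.mul_suqPow_mem hq hx n)
    have hgs := mul_pow_mem_suqHomog_of_mul_mem (fun _ _ => mul_star_g_mem_suqHomog) k hg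
    convert hgs using 2
    rw [← hi]
    push_cast
    ring
  exact hle hy

end SUqRel

section Tensor

variable {A : Type*} [Ring A] [Algebra ℂ A] [StarRing A] {q : ℂ} {a g : A}

def suqHomogTmuls (a g : A) (p : ℤ) : Set (A ⊗[ℂ] A) :=
  {t | ∃ p₁ p₂ : ℤ, p₁ + p₂ = p ∧ ∃ u ∈ suqHomog a g p₁, ∃ v ∈ suqHomog a g p₂, t = u ⊗ₜ[ℂ] v}

def suqHomogTensor (a g : A) (p : ℤ) : Submodule ℂ (A ⊗[ℂ] A) :=
  Submodule.span ℂ (suqHomogTmuls a g p)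

theorem tmul_mem_suqHomogTensor {p₁ p₂ p : ℤ} {u v : A} (hu : u ∈ suqHomog a g p₁)
    (hv : v ∈ suqHomog a g p₂) (hp : p₁ + p₂ = p) : u ⊗ₜ[ℂ] v ∈ suqHomogTensor a g p :=
  Submodule.subset_span ⟨p₁, p₂, hp, u, hu, v, hv, rfl⟩

theorem SUqAntipode.apply_mem {S : A →ₗ[ℂ] A} (hS : SUqAntipode q a g S) {p : ℤ} {x : A}
    (hx : x ∈ suqHomog a g p) : S x ∈ suqHomog a g p :=
  hS.2.2.2.2.2.1 p x hx

theorem SUqAntipode.map_mul {S : A →ₗ[ℂ] A} (hS : SUqAntipode q a g S) {p r : ℤ} {x y : A}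
    (hx : x ∈ suqHomog a g p) (hy : y ∈ suqHomog a g r) :
    S (x * y) = ((q / starRingEnd ℂ q) ^ (-(p * r))) • (S y * S x) :=
  hS.2.2.2.2.2.2 p r x hx y hy

variable [StarModule ℂ A] {μ : A ⊗[ℂ] A →ₗ[ℂ] A ⊗[ℂ] A →ₗ[ℂ] A ⊗[ℂ] A}
  (hrel : SUqRel q a g) (hq : q ≠ 0) (hμ : SUqBraidedMul q a g μ)
include hrel hq hμ

theorem SUqBraidedMul.apply_mem_suqHomogTensor {p r : ℤ} {X Y : A ⊗[ℂ] A}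
    (hX : X ∈ suqHomogTensor a g p) (hY : Y ∈ suqHomogTensor a g r) :
    μ X Y ∈ suqHomogTensor a g (p + r) := by
  refine (?_ : Submodule.map₂ μ _ _ ≤ _) (Submodule.apply_mem_map₂ μ hX hY)
  rw [suqHomogTensor, suqHomogTensor, Submodule.map₂_span_span, Submodule.span_le,
    suqHomogTmuls, suqHomogTmuls]
  rintro _ ⟨_, ⟨p₁, p₂, rfl, u, hu, v, hv, rfl⟩, _, ⟨r₁, r₂, rfl, y, hy, w, hw, rfl⟩, rfl⟩
  change μ (u ⊗ₜ v) (y ⊗ₜ w) ∈ _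
  rw [hμ u w p₂ r₁ v hv y hy]
  exact Submodule.smul_mem _ _ (tmul_mem_suqHomogTensor (hrel.mul_mem_suqHomog hq hu hy)
    (hrel.mul_mem_suqHomog hq hv hw) (by ring))

variable {S : A →ₗ[ℂ] A} {c : A ⊗[ℂ] A →ₗ[ℂ] A ⊗[ℂ] A}
  (hS : SUqAntipode q a g S) (hc : SUqFlip q a g c)
include hS hc

theorem map_flip_braidedMul {p r : ℤ} {X Y : A ⊗[ℂ] A} (hX : X ∈ suqHomogTensor a g p)
    (hY : Y ∈ suqHomogTensor a g r) :
    TensorProduct.map S S (c (μ X Y))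
      = ((q / starRingEnd ℂ q) ^ (-(p * r))) •
        μ (TensorProduct.map S S (c Y)) (TensorProduct.map S S (c X)) := by
  set T := TensorProduct.map S S ∘ₗ c
  have hζ : q / starRingEnd ℂ q ≠ 0 := div_ne_zero hq (by simpa using hq)
  set z := (q / starRingEnd ℂ q) ^ (-(p * r))
  have hgen : ∀ X ∈ suqHomogTmuls a g p, ∀ Y ∈ suqHomogTmuls a g r,
      T (μ X Y) = z • μ (T Y) (T X) := by
    rintro _ ⟨p₁, p₂, rfl, u, hu, v, hv, rfl⟩ _ ⟨r₁, r₂, rfl, y, hy, w, hw, rfl⟩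
    simp only [T, z, LinearMap.comp_apply]
    rw [hμ u w p₂ r₁ v hv y hy, map_smul, map_smul,
      hc _ _ _ (hrel.mul_mem_suqHomog hq hu hy) _ (hrel.mul_mem_suqHomog hq hv hw),
      map_smul, TensorProduct.map_tmul, hS.map_mul hv hw, hS.map_mul hu hy,
      hc r₁ r₂ y hy w hw, hc p₁ p₂ u hu v hv]
    simp only [map_smul, LinearMap.smul_apply, TensorProduct.map_tmul]
    rw [hμ (S w) (S u) r₁ p₂ (S y) (hS.apply_mem hy) (S v) (hS.apply_mem hv)]
    simp only [TensorProduct.smul_tmul', TensorProduct.tmul_smul, smul_smul, ← zpow_add₀ hζ]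
    congr 3
    ring
  have hgenX : ∀ X ∈ suqHomogTmuls a g p, T (μ X Y) = z • μ (T Y) (T X) := fun X hX =>
    LinearMap.eqOn_span (f := T ∘ₗ μ X) (g := z • μ.flip (T X) ∘ₗ T) (hgen X hX) hY
  exact LinearMap.eqOn_span (f := T ∘ₗ μ.flip Y) (g := z • μ (T Y) ∘ₗ T) hgenX hX

end Tensor

section Comul

variable {A : Type*} [Ring A] [Algebra ℂ A] [StarRing A] {q : ℂ} {a g : A}
  {μ : A ⊗[ℂ] A →ₗ[ℂ] A ⊗[ℂ] A →ₗ[ℂ] A ⊗[ℂ] A} {Δ : A →ₗ[ℂ] A ⊗[ℂ] A} {S : A →ₗ[ℂ] A}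
  {c : A ⊗[ℂ] A →ₗ[ℂ] A ⊗[ℂ] A}

def ComulAntipodeHomog (a g : A) (Δ : A →ₗ[ℂ] A ⊗[ℂ] A) (S : A →ₗ[ℂ] A)
    (c : A ⊗[ℂ] A →ₗ[ℂ] A ⊗[ℂ] A) (p : ℤ) (x : A) : Prop :=
  x ∈ suqHomog a g p ∧ Δ x ∈ suqHomogTensor a g p ∧ Δ (S x) = TensorProduct.map S S (c (Δ x))

theorem SUqComul.map_mul (hΔ : SUqComul q a g μ Δ) (x y : A) : Δ (x * y) = μ (Δ x) (Δ y) :=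
  hΔ.2.1 x y

theorem ComulAntipodeHomog.of_eq {p p' : ℤ} {x : A} (h : ComulAntipodeHomog a g Δ S c p x)
    (hp : p = p') : ComulAntipodeHomog a g Δ S c p' x :=
  hp ▸ h

variable (hΔ : SUqComul q a g μ Δ) (hS : SUqAntipode q a g S) (hc : SUqFlip q a g c)
include hΔ hS hc

theorem comulAntipodeHomog_one : ComulAntipodeHomog a g Δ S c 0 1 := by
  refine ⟨one_mem_suqHomog a g, ?_, ?_⟩
  · rw [hΔ.1]
    exact tmul_mem_suqHomogTensor (one_mem_suqHomog a g) (one_mem_suqHomog a g) rfl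
  · rw [hS.1, hΔ.1, hc 0 0 1 (one_mem_suqHomog a g) 1 (one_mem_suqHomog a g),
      map_smul, TensorProduct.map_tmul, hS.1]
    simp

theorem comulAntipodeHomog_a (hq : q ≠ 0) : ComulAntipodeHomog a g Δ S c 0 a := by
  refine ⟨a_mem_suqHomog a g, ?_, ?_⟩
  · rw [hΔ.2.2.1]
    exact sub_mem (tmul_mem_suqHomogTensor (a_mem_suqHomog a g) (a_mem_suqHomog a g) rfl)
      (Submodule.smul_mem _ _
        (tmul_mem_suqHomogTensor (star_g_mem_suqHomog a g) (g_mem_suqHomog a g) rfl))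
  · rw [hS.2.1, hΔ.2.2.2.2.1, hΔ.2.2.1, map_sub, map_smul, map_sub, map_smul,
      hc 0 0 a (a_mem_suqHomog a g) a (a_mem_suqHomog a g),
      hc (-1) 1 (star g) (star_g_mem_suqHomog a g) g (g_mem_suqHomog a g)]
    simp only [map_smul, TensorProduct.map_tmul, hS.2.1, hS.2.2.2.1, hS.2.2.2.2.1,
      TensorProduct.smul_tmul', TensorProduct.tmul_smul, smul_smul]
    norm_num
    congr 2
    have : starRingEnd ℂ q ≠ 0 := by simpa using hq
    field_simp

theorem comulAntipodeHomog_star_a (hq : q ≠ 0) : ComulAntipodeHomog a g Δ S c 0 (star a) := by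
  refine ⟨star_a_mem_suqHomog a g, ?_, ?_⟩
  · rw [hΔ.2.2.2.2.1]
    exact sub_mem
      (tmul_mem_suqHomogTensor (star_a_mem_suqHomog a g) (star_a_mem_suqHomog a g) rfl)
      (Submodule.smul_mem _ _
        (tmul_mem_suqHomogTensor (g_mem_suqHomog a g) (star_g_mem_suqHomog a g) rfl))
  · rw [hS.2.2.1, hΔ.2.2.1, hΔ.2.2.2.2.1, map_sub, map_smul, map_sub, map_smul,
      hc 0 0 (star a) (star_a_mem_suqHomog a g) (star a) (star_a_mem_suqHomog a g),
      hc 1 (-1) g (g_mem_suqHomog a g) (star g) (star_g_mem_suqHomog a g)]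
    simp only [map_smul, TensorProduct.map_tmul, hS.2.2.1, hS.2.2.2.1, hS.2.2.2.2.1,
      TensorProduct.smul_tmul', TensorProduct.tmul_smul, smul_smul]
    norm_num
    congr 2
    have : starRingEnd ℂ q ≠ 0 := by simpa using hq
    field_simp

theorem comulAntipodeHomog_g : ComulAntipodeHomog a g Δ S c 1 g := by
  refine ⟨g_mem_suqHomog a g, ?_, ?_⟩
  · rw [hΔ.2.2.2.1]
    exact add_mem (tmul_mem_suqHomogTensor (g_mem_suqHomog a g) (a_mem_suqHomog a g) rfl)
      (tmul_mem_suqHomogTensor (star_a_mem_suqHomog a g) (g_mem_suqHomog a g) rfl)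
  · rw [hS.2.2.2.1, map_smul, hΔ.2.2.2.1, map_add, map_add,
      hc 1 0 g (g_mem_suqHomog a g) a (a_mem_suqHomog a g),
      hc 0 1 (star a) (star_a_mem_suqHomog a g) g (g_mem_suqHomog a g)]
    simp only [map_smul, TensorProduct.map_tmul, hS.2.1, hS.2.2.1, hS.2.2.2.1,
      TensorProduct.smul_tmul', TensorProduct.tmul_smul, smul_smul]
    norm_num
    simp [TensorProduct.neg_tmul, TensorProduct.smul_tmul', add_comm]

theorem comulAntipodeHomog_star_g : ComulAntipodeHomog a g Δ S c (-1) (star g) := by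
  refine ⟨star_g_mem_suqHomog a g, ?_, ?_⟩
  · rw [hΔ.2.2.2.2.2]
    exact add_mem
      (tmul_mem_suqHomogTensor (star_g_mem_suqHomog a g) (star_a_mem_suqHomog a g) rfl)
      (tmul_mem_suqHomogTensor (a_mem_suqHomog a g) (star_g_mem_suqHomog a g) rfl)
  · rw [hS.2.2.2.2.1, map_smul, hΔ.2.2.2.2.2, map_add, map_add,
      hc (-1) 0 (star g) (star_g_mem_suqHomog a g) (star a) (star_a_mem_suqHomog a g),
      hc 0 (-1) a (a_mem_suqHomog a g) (star g) (star_g_mem_suqHomog a g)]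
    simp only [map_smul, TensorProduct.map_tmul, hS.2.1, hS.2.2.1, hS.2.2.2.2.1,
      TensorProduct.smul_tmul', TensorProduct.tmul_smul, smul_smul]
    norm_num
    simp [TensorProduct.neg_tmul, TensorProduct.smul_tmul', add_comm]

variable [StarModule ℂ A] (hrel : SUqRel q a g) (hq : q ≠ 0) (hμ : SUqBraidedMul q a g μ)
include hrel hq hμ

theorem ComulAntipodeHomog.mul {p r : ℤ} {x y : A} (hx : ComulAntipodeHomog a g Δ S c p x)
    (hy : ComulAntipodeHomog a g Δ S c r y) : ComulAntipodeHomog a g Δ S c (p + r) (x * y) := by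
  obtain ⟨hx, hΔx, hx'⟩ := hx
  obtain ⟨hy, hΔy, hy'⟩ := hy
  refine ⟨hrel.mul_mem_suqHomog hq hx hy, ?_, ?_⟩
  · rw [hΔ.map_mul]
    exact hμ.apply_mem_suqHomogTensor hrel hq hΔx hΔy
  · rw [hS.map_mul hx hy, map_smul, hΔ.map_mul, hx', hy',
      ← map_flip_braidedMul hrel hq hμ hS hc hΔx hΔy, hΔ.map_mul]

theorem ComulAntipodeHomog.pow {p : ℤ} {x : A} (hx : ComulAntipodeHomog a g Δ S c p x)
    (t : ℕ) : ComulAntipodeHomog a g Δ S c (t * p) (x ^ t) := by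
  induction t with
  | zero => simpa using comulAntipodeHomog_one hΔ hS hc
  | succ t ih =>
    rw [pow_succ]
    exact (ih.mul hΔ hS hc hrel hq hμ hx).of_eq (by push_cast; ring)

theorem comulAntipodeHomog_suqPow (n : ℤ) : ComulAntipodeHomog a g Δ S c 0 (suqPow a n) := by
  unfold suqPow
  split_ifs
  · simpa using (comulAntipodeHomog_a hΔ hS hc hq).pow hΔ hS hc hrel hq hμ n.toNat
  · simpa using (comulAntipodeHomog_star_a hΔ hS hc hq).pow hΔ hS hc hrel hq hμ (-n).toNat

theorem comulAntipodeHomog_suqMono (i : ℤ × ℕ × ℕ) :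
    ComulAntipodeHomog a g Δ S c ((i.2.1 : ℤ) - i.2.2) (suqMono a g i) := by
  have hg := (comulAntipodeHomog_g hΔ hS hc).pow hΔ hS hc hrel hq hμ i.2.1
  have hgs := (comulAntipodeHomog_star_g hΔ hS hc).pow hΔ hS hc hrel hq hμ i.2.2
  refine ((((comulAntipodeHomog_suqPow hΔ hS hc hrel hq hμ i.1).mul hΔ hS hc hrel hq hμ hg).mul
    hΔ hS hc hrel hq hμ hgs).of_eq ?_)
  ring

end Comul

theorem suq_comul_antipode_general {A : Type*} [Ring A] [Algebra ℂ A] [StarRing A] [StarModule ℂ A]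
    (q : ℂ) (hq0 : 0 < ‖q‖)
    (a g : A) (hrel : SUqRel q a g) (hbasis : SUqBasis a g)
    (μ : A ⊗[ℂ] A →ₗ[ℂ] A ⊗[ℂ] A →ₗ[ℂ] A ⊗[ℂ] A) (hμ : SUqBraidedMul q a g μ)
    (Δ : A →ₗ[ℂ] A ⊗[ℂ] A) (hΔ : SUqComul q a g μ Δ)
    (S : A →ₗ[ℂ] A) (hS : SUqAntipode q a g S)
    (c : A ⊗[ℂ] A →ₗ[ℂ] A ⊗[ℂ] A) (hc : SUqFlip q a g c) :
    ∀ x : A, Δ (S x) = (TensorProduct.map S S) (c (Δ x)) := by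
  have hq : q ≠ 0 := norm_pos_iff.1 hq0
  have hmaps : Δ ∘ₗ S = TensorProduct.map S S ∘ₗ c ∘ₗ Δ :=
    LinearMap.ext_on_range hbasis.2 fun i =>
      (comulAntipodeHomog_suqMono hΔ hS hc hrel hq hμ i).2.2
  exact LinearMap.congr_fun hmaps

/-- `Δ ∘ S = (S⊗S) ∘ c ∘ Δ` on `Pol(SU_q(2))`, where `c` is the braided
flip. -/
theorem suq_comul_antipode {A : Type*} [Ring A] [Algebra ℂ A] [StarRing A] [StarModule ℂ A]
    (q : ℂ) (hq0 : 0 < ‖q‖) (hq1 : ‖q‖ < 1)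
    (a g : A) (hrel : SUqRel q a g) (hbasis : SUqBasis a g)
    (μ : A ⊗[ℂ] A →ₗ[ℂ] A ⊗[ℂ] A →ₗ[ℂ] A ⊗[ℂ] A) (hμ : SUqBraidedMul q a g μ)
    (Δ : A →ₗ[ℂ] A ⊗[ℂ] A) (hΔ : SUqComul q a g μ Δ)
    (S : A →ₗ[ℂ] A) (hS : SUqAntipode q a g S)
    (c : A ⊗[ℂ] A →ₗ[ℂ] A ⊗[ℂ] A) (hc : SUqFlip q a g c) :
    ∀ x : A, Δ (S x) = (TensorProduct.map S S) (c (Δ x)) :=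
  suq_comul_antipode_general q hq0 a g hrel hbasis μ hμ Δ hΔ S hS c hc
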